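/- arXiv:gr-qc/0203066 — 3 statements merged into one kernel-verified Lean document; each statement's English description precedes it below -/
import Mathlib

section
/- For all real numbers w, w̃ > 0, L, L̃ ≥ 0, m ≥ 0, and s ≥ 1, the inequality ( w̃²·(m² + w² + L/s²) − w²·(1 + w̃² + L̃/s²) ) / ( w̃·√(m² + w² + L/s²) + w·√(1 + w̃² + L̃/s²) ) ≤ w̃·(m² + L)/w holds. -/
/-! After cancelling `w²·w̃²`, the numerator is at most `w̃²·(m² + L)` because `L / s² ≤ L`,
while the denominator is at least `w·w̃` because `√(1 + w̃² + L̃/s²) ≥ w̃`. -/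

lemma numerator_le {w wt m a b L : ℝ} (ha : a ≤ L) (hb : 0 ≤ b) :
    wt ^ 2 * (m ^ 2 + w ^ 2 + a) - w ^ 2 * (1 + wt ^ 2 + b) ≤ wt ^ 2 * (m ^ 2 + L) := by
  nlinarith [sq_nonneg w, mul_nonneg (sq_nonneg w) hb, mul_le_mul_of_nonneg_left ha (sq_nonneg wt)]

lemma le_sqrt_one_add_sq_add {x b : ℝ} (hx : 0 ≤ x) (hb : 0 ≤ b) : x ≤ √(1 + x ^ 2 + b) :=
  (Real.le_sqrt hx (by positivity)).2 (by linarith)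

lemma mul_le_denominator {w wt A b : ℝ} (hw : 0 ≤ w) (hwt : 0 ≤ wt) (hb : 0 ≤ b) :
    w * wt ≤ wt * √A + w * √(1 + wt ^ 2 + b) := by
  have hA : 0 ≤ wt * √A := by positivity
  nlinarith [mul_le_mul_of_nonneg_left (le_sqrt_one_add_sq_add hwt hb) hw]

theorem stmt_2_general (w wt L Lt m s : ℝ) (hw : 0 < w) (hwt : 0 < wt)
    (hL : 0 ≤ L) (hLt : 0 ≤ Lt) (hs : 1 ≤ s) :
    (wt ^ 2 * (m ^ 2 + w ^ 2 + L / s ^ 2) - w ^ 2 * (1 + wt ^ 2 + Lt / s ^ 2)) /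
      (wt * Real.sqrt (m ^ 2 + w ^ 2 + L / s ^ 2) +
        w * Real.sqrt (1 + wt ^ 2 + Lt / s ^ 2)) ≤
    wt * (m ^ 2 + L) / w := by
  have hLs : L / s ^ 2 ≤ L := div_le_self hL (one_le_pow₀ hs)
  have hLts : 0 ≤ Lt / s ^ 2 := by positivity
  calc _ ≤ wt ^ 2 * (m ^ 2 + L) / (w * wt) :=
        div_le_div₀ (by positivity) (numerator_le hLs hLts) (by positivity)
          (mul_le_denominator hw.le hwt.le hLts)
    _ = wt * (m ^ 2 + L) / w := by field_simp

/-- Key algebraic estimate for the characteristic equation. -/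
theorem stmt_2 (w wt L Lt m s : ℝ) (hw : 0 < w) (hwt : 0 < wt)
    (hL : 0 ≤ L) (hLt : 0 ≤ Lt) (hm : 0 ≤ m) (hs : 1 ≤ s) :
    (wt ^ 2 * (m ^ 2 + w ^ 2 + L / s ^ 2) - w ^ 2 * (1 + wt ^ 2 + Lt / s ^ 2)) /
      (wt * Real.sqrt (m ^ 2 + w ^ 2 + L / s ^ 2) +
        w * Real.sqrt (1 + wt ^ 2 + Lt / s ^ 2)) ≤
    wt * (m ^ 2 + L) / w :=
  stmt_2_general w wt L Lt m s hw hwt hL hLt hs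
end

section
/- Suppose μ : [1,∞) × ℝ → ℝ is differentiable in t and satisfies the equation e^{−2μ(t,θ)}·(2t·μ_t(t,θ) − 1) + 1 = 8π t² p(t,θ) with p(t,θ) ≥ 0. Then for every t ≥ 1 and θ, e^{2μ(t,θ)} ≥ t / (e^{−2μ(1,θ)} − 1 + t). -/
/-!
With `g = e^{-2μ}` the field equation says `(t (g - 1))' = -8π t² p ≤ 0`, so `t (g(t) - 1)`
decreases from its value `g(1) - 1` at `t = 1`; this is `t e^{-2μ(t)} ≤ e^{-2μ(1)} - 1 + t`.
-/

open Real Set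

theorem mul_sub_one_le_of_hasDerivAt {g g' : ℝ → ℝ} {a t : ℝ}
    (hg : ∀ s ≥ a, HasDerivAt g (g' s) s) (hg' : ∀ s ≥ a, g s - 1 + s * g' s ≤ 0)
    (ht : a ≤ t) : t * (g t - 1) ≤ a * (g a - 1) := by
  have hderiv : ∀ s ≥ a, HasDerivAt (fun s => s * (g s - 1)) (g s - 1 + s * g' s) s := by
    intro s hs
    simpa using (hasDerivAt_id' s).fun_mul ((hg s hs).sub_const 1)
  have hanti : AntitoneOn (fun s => s * (g s - 1)) (Ici a) := by
    exact antitoneOn_of_hasDerivWithinAt_nonpos (convex_Ici a)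
      (fun s hs => (hderiv s hs).continuousAt.continuousWithinAt)
      (fun s hs => (hderiv s (interior_subset hs)).hasDerivWithinAt)
      (fun s hs => hg' s (interior_subset hs))
  exact hanti self_mem_Ici ht ht

theorem div_le_exp_of_mul_exp_neg_le {x t D : ℝ} (ht : 0 < t) (h : t * exp (-x) ≤ D) :
    t / D ≤ exp x := by
  have hD : 0 < D := (mul_pos ht (exp_pos _)).trans_le h
  rw [div_le_iff₀ hD]
  calc t = exp x * (t * exp (-x)) := by
        rw [mul_left_comm, ← exp_add, add_neg_cancel, exp_zero, mul_one]
    _ ≤ exp x * D := by gcongr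

/-- Lower bound on the lapse from integrating the field equation (af2)
with nonnegative pressure. -/
theorem stmt_4 (μ μt p : ℝ → ℝ → ℝ)
    (hderiv : ∀ θ : ℝ, ∀ t ≥ (1:ℝ), HasDerivAt (fun s => μ s θ) (μt t θ) t)
    (heq : ∀ θ : ℝ, ∀ t ≥ (1:ℝ),
      Real.exp (-2 * μ t θ) * (2 * t * μt t θ - 1) + 1 = 8 * π * t ^ 2 * p t θ)
    (hp : ∀ θ : ℝ, ∀ t ≥ (1:ℝ), 0 ≤ p t θ) :
    ∀ θ : ℝ, ∀ t ≥ (1:ℝ),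
      Real.exp (2 * μ t θ) ≥ t / (Real.exp (-2 * μ 1 θ) - 1 + t) := by
  intro θ t ht
  have hg : ∀ s ≥ (1:ℝ), HasDerivAt (fun s => exp (-2 * μ s θ))
      (exp (-2 * μ s θ) * (-2 * μt s θ)) s :=
    fun s hs => ((hderiv θ s hs).const_mul (-2)).exp
  have hg' : ∀ s ≥ (1:ℝ),
      exp (-2 * μ s θ) - 1 + s * (exp (-2 * μ s θ) * (-2 * μt s θ)) ≤ 0 := by
    intro s hs
    have hpressure : 0 ≤ 8 * π * s ^ 2 * p s θ := by have := hp θ s hs; positivity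
    linear_combination hpressure - heq θ s hs
  have hdecay := mul_sub_one_le_of_hasDerivAt hg hg' ht
  refine div_le_exp_of_mul_exp_neg_le (by linarith) ?_
  rw [neg_mul_eq_neg_mul]
  linarith
end

section
/- Let g : [1,∞) → (0,∞) be C¹ with g'(t) ≥ (1 − g(t))·g(t)/t for all t ≥ 1 (this is the differential inequality satisfied by e^{2μ}). Then g(t) ≥ t/(g(1)^{−1} − 1 + t) for all t ≥ 1. -/
/-!
The substitution `F t = t / g t - t` linearises the Riccati inequality: its derivative is
`(g - t g' - g²) / g²`, which is `≤ 0` exactly when `t g' ≥ (1 - g) g`. Hence `F` is antitone,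
`F t ≤ F 1 = (g 1)⁻¹ - 1`, and solving for `g t` gives the bound; equality holds for the
solution `t / (c - 1 + t)` of the ODE, on which `F` is constant.
-/

section RiccatiComparison

variable {g g' : ℝ → ℝ}

theorem hasDerivAt_div_sub_self {t : ℝ} (hg : HasDerivAt g (g' t) t) (hg0 : g t ≠ 0) :
    HasDerivAt (fun s => s / g s - s) ((g t - t * g' t - g t ^ 2) / g t ^ 2) t := by
  refine (((hasDerivAt_id t).div hg hg0).sub (hasDerivAt_id t)).congr_deriv ?_
  simp only [one_mul, id]
  field_simp

theorem antitoneOn_div_sub_self {s : Set ℝ} (hs : Convex ℝ s)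
    (hg0 : ∀ t ∈ s, g t ≠ 0) (hderiv : ∀ t ∈ s, HasDerivAt g (g' t) t)
    (hineq : ∀ t ∈ s, (1 - g t) * g t ≤ t * g' t) :
    AntitoneOn (fun t => t / g t - t) s := by
  have hF : ∀ t ∈ s, HasDerivAt (fun s => s / g s - s) ((g t - t * g' t - g t ^ 2) / g t ^ 2) t :=
    fun t ht => hasDerivAt_div_sub_self (hderiv t ht) (hg0 t ht)
  refine antitoneOn_of_hasDerivWithinAt_nonpos hs
    (fun t ht => (hF t ht).continuousAt.continuousWithinAt)
    (fun t ht => (hF t (interior_subset ht)).hasDerivWithinAt) fun t ht => ?_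
  have ht := interior_subset ht
  exact div_nonpos_of_nonpos_of_nonneg (by linarith [hineq t ht]) (sq_nonneg _)

end RiccatiComparison

/-- Comparison lemma for the Riccati-type inequality g' ≥ g(1−g)/t on [1,∞). -/
theorem stmt_5 (g g' : ℝ → ℝ)
    (hpos : ∀ t ≥ (1:ℝ), 0 < g t)
    (hderiv : ∀ t ≥ (1:ℝ), HasDerivAt g (g' t) t)
    (hineq : ∀ t ≥ (1:ℝ), g' t ≥ (1 - g t) * g t / t) :
    ∀ t ≥ (1:ℝ), g t ≥ t / ((g 1)⁻¹ - 1 + t) := by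
  have hanti : AntitoneOn (fun t => t / g t - t) (Set.Ici 1) :=
    antitoneOn_div_sub_self (convex_Ici 1) (fun t ht => (hpos t ht).ne') hderiv
      fun t ht => (div_le_iff₀' (by linarith [Set.mem_Ici.mp ht])).mp (hineq t ht)
  intro t ht
  have hgt := hpos t ht
  have hbound : t / g t ≤ (g 1)⁻¹ - 1 + t := by
    have := hanti Set.self_mem_Ici ht ht
    simp only [one_div] at this
    linarith
  have hden : 0 < (g 1)⁻¹ - 1 + t := (div_pos (by linarith) hgt).trans_le hbound
  rw [ge_iff_le, div_le_iff₀ hden]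
  rw [div_le_iff₀ hgt] at hbound
  linarith
end
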